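/- arXiv:1207.2406 — 2 statements merged into one kernel-verified Lean document; each statement's English description precedes it below -/
import Mathlib

section
/- For p ≥ p* > 0, the quantity p·log(p/p*) + p* − p is at least 2(√p − √p*)². -/
/-!
Write `p = a ^ 2` and `pstar = b ^ 2` with `0 < b ≤ a`. The first term of the series
`log (x / y) = 2 ∑ₖ ((x - y) / (x + y)) ^ (2k + 1) / (2k + 1)` gives
`log (p / pstar) = 2 log (a / b) ≥ 4 (a - b) / (a + b)`, and with this lower bound the
difference of the two sides of the inequality is `(a - b) ^ 3 / (a + b) ≥ 0`.
-/

open Real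

theorem Real.two_mul_div_add_two_le_log_one_add {x : ℝ} (hx : 0 ≤ x) :
    2 * x / (x + 2) ≤ log (1 + x) := by
  have hterm : ∀ k : ℕ, 0 ≤ 2 * (1 / (2 * k + 1)) * (x / (x + 2)) ^ (2 * k + 1) :=
    fun k => by positivity
  simpa [mul_div_assoc] using le_hasSum (hasSum_log_one_add hx) 0 fun k _ => hterm k

theorem Real.two_mul_sub_div_add_le_log_div {x y : ℝ} (hy : 0 < y) (hyx : y ≤ x) :
    2 * (x - y) / (x + y) ≤ log (x / y) := by
  have h := two_mul_div_add_two_le_log_one_add (div_nonneg (sub_nonneg.2 hyx) hy.le)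
  have hy' := hy.ne'
  rwa [show 1 + (x - y) / y = x / y by field_simp; ring,
    show 2 * ((x - y) / y) / ((x - y) / y + 2) = 2 * (x - y) / (x + y) by
      field_simp; ring] at h

theorem poisson_relent_ge_hellinger (p pstar : ℝ) (h0 : 0 < pstar) (h1 : pstar ≤ p) :
    2 * (Real.sqrt p - Real.sqrt pstar) ^ 2 ≤ p * log (p / pstar) + pstar - p := by
  obtain ⟨a, b, hb, hba, rfl, rfl⟩ : ∃ a b : ℝ, 0 < b ∧ b ≤ a ∧ p = a ^ 2 ∧ pstar = b ^ 2 :=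
    ⟨√p, √pstar, sqrt_pos.2 h0, sqrt_le_sqrt h1, (sq_sqrt (h0.le.trans h1)).symm,
      (sq_sqrt h0.le).symm⟩
  have ha : 0 ≤ a := hb.le.trans hba
  have hlog : 2 * (2 * (a - b) / (a + b)) ≤ log (a ^ 2 / b ^ 2) := by
    rw [← div_pow, log_pow]
    push_cast
    gcongr
    exact two_mul_sub_div_add_le_log_div hb hba
  have hgap : a ^ 2 * (2 * (2 * (a - b) / (a + b))) + b ^ 2 - a ^ 2 - 2 * (a - b) ^ 2
      = (a - b) ^ 3 / (a + b) := by
    field_simp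
    ring
  have hgap_nonneg : 0 ≤ (a - b) ^ 3 / (a + b) := by
    have := sub_nonneg.2 hba
    positivity
  rw [sqrt_sq ha, sqrt_sq hb.le]
  linarith [mul_le_mul_of_nonneg_left hlog (sq_nonneg a)]
end

section
/- Let W_1,…,W_N be independent Bernoulli random variables with success probabilities r_1,…,r_N, and let α_1,…,α_N be nonnegative weights summing to 1. Set N_α = 1/max_j α_j, r̂ = Σ_j α_j W_j, and r* = Σ_j α_j r_j. Then for any 0 < r < r*, P(r̂ < r) ≤ exp(−N_α · D(r‖r*)), where D(r‖r*) is the relative entropy between Bernoulli(r) and Bernoulli(r*). -/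
open MeasureTheory ProbabilityTheory Real

/-!
Chernoff's method with the tilt `t = log q / max α`, `0 < q ≤ 1`. With `θⱼ = αⱼ / max α ∈ [0, 1]`
and `pⱼ = P(Wⱼ = 1) ≥ rⱼ`, concavity of `x ↦ x ^ θⱼ` bounds the moment generating function
`1 + pⱼ (q ^ θⱼ - 1)` of `αⱼ Wⱼ` by `(1 + pⱼ (q - 1)) ^ θⱼ`, and weighted AM–GM bounds the product
of these by `(1 + (q - 1) Σ αⱼ pⱼ) ^ (1 / max α) ≤ (1 + (q - 1) r*) ^ (1 / max α)`. The choice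
`q = r (1 - r*) / (r* (1 - r))` makes `q ^ (-r) (1 + (q - 1) r*)` equal to `exp (-D(r‖r*))`.
-/

noncomputable def bernoulliKL (a b : ℝ) : ℝ :=
  a * log (a / b) + (1 - a) * log ((1 - a) / (1 - b))

lemma bernoulliKL_one_right_nonpos {a : ℝ} (h0 : 0 ≤ a) (h1 : a ≤ 1) : bernoulliKL a 1 ≤ 0 := by
  -- junk value: `log ((1 - a) / 0) = log 0 = 0`
  simp only [bernoulliKL, sub_self, div_zero, log_zero, mul_zero, add_zero, div_one]
  exact mul_nonpos_of_nonneg_of_nonpos h0 (log_nonpos h0 h1)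

lemma exists_rpow_neg_mul_eq_exp_neg_bernoulliKL {a b : ℝ} (ha0 : 0 < a) (hab : a < b)
    (hb1 : b < 1) : ∃ q, 0 < q ∧ q < 1 ∧ q ^ (-a) * (1 + (q - 1) * b) = exp (-bernoulliKL a b) := by
  have hb0 : 0 < b := ha0.trans hab
  have ha1 : 0 < 1 - a := by linarith
  have hb1' : 0 < 1 - b := sub_pos.2 hb1
  -- the minimiser of `q ↦ q ^ (-a) * (1 + (q - 1) * b)`
  refine ⟨a * (1 - b) / (b * (1 - a)), by positivity, (div_lt_one (by positivity)).2 (by nlinarith),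
    ?_⟩
  have hlin : 1 + (a * (1 - b) / (b * (1 - a)) - 1) * b = (1 - b) / (1 - a) := by
    field_simp; ring
  rw [hlin, rpow_def_of_pos (by positivity), ← exp_log (by positivity : 0 < (1 - b) / (1 - a)),
    ← exp_add]
  congr 1
  simp only [bernoulliKL, log_div, log_mul, ha0.ne', hb0.ne', ha1.ne', hb1'.ne', ne_eq,
    mul_eq_zero, or_self, not_false_eq_true]
  ring

lemma ciSup_pos_of_sum_eq_one {ι : Type*} [Fintype ι] {α : ι → ℝ} (hα1 : ∑ j, α j = 1) :
    0 < ⨆ j, α j := by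
  by_contra! h
  linarith [Finset.sum_nonpos fun j (_ : j ∈ Finset.univ) =>
    (le_ciSup (Set.finite_range α).bddAbove j).trans h]

lemma sum_mul_le_one_of_le_one {ι : Type*} {s : Finset ι} {α p : ι → ℝ}
    (hα0 : ∀ j ∈ s, 0 ≤ α j) (hα1 : ∑ j ∈ s, α j = 1) (hp1 : ∀ j ∈ s, p j ≤ 1) :
    ∑ j ∈ s, α j * p j ≤ 1 :=
  hα1 ▸ Finset.sum_le_sum fun j hj => mul_le_of_le_one_right (hα0 j hj) (hp1 j hj)

lemma one_add_mul_rpow_sub_one_le {p q θ : ℝ} (hp0 : 0 ≤ p) (hp1 : p ≤ 1) (hq : 0 ≤ q)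
    (hθ0 : 0 ≤ θ) (hθ1 : θ ≤ 1) : 1 + p * (q ^ θ - 1) ≤ (1 + p * (q - 1)) ^ θ := by
  have h := (concaveOn_rpow hθ0 hθ1).2 (Set.mem_Ici.2 zero_le_one) (Set.mem_Ici.2 hq)
    (sub_nonneg.2 hp1) hp0 (sub_add_cancel 1 p)
  simp only [smul_eq_mul, one_rpow] at h
  rw [show (1 - p) * 1 + p * q = 1 + p * (q - 1) by ring] at h
  linarith

lemma prod_one_add_mul_rpow_sub_one_le {ι : Type*} {s : Finset ι} {α p : ι → ℝ} {m q : ℝ}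
    (hα0 : ∀ j ∈ s, 0 ≤ α j) (hα1 : ∑ j ∈ s, α j = 1) (hαm : ∀ j ∈ s, α j ≤ m) (hm : 0 < m)
    (hp0 : ∀ j ∈ s, 0 ≤ p j) (hp1 : ∀ j ∈ s, p j ≤ 1) (hq : 0 ≤ q) :
    ∏ j ∈ s, (1 + p j * (q ^ (α j / m) - 1)) ≤ (1 + (q - 1) * ∑ j ∈ s, α j * p j) ^ (1 / m) := by
  set z : ι → ℝ := fun j => 1 + p j * (q - 1)
  have hz : ∀ j ∈ s, 0 ≤ z j := fun j hj => by
    have := hp0 j hj; have := hp1 j hj; simp only [z]; nlinarith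
  calc ∏ j ∈ s, (1 + p j * (q ^ (α j / m) - 1))
      ≤ ∏ j ∈ s, z j ^ (α j / m) := by
        refine Finset.prod_le_prod (fun j hj => ?_) (fun j hj => ?_)
        · have := hp0 j hj; have := hp1 j hj
          nlinarith [rpow_nonneg hq (α j / m)]
        · exact one_add_mul_rpow_sub_one_le (hp0 j hj) (hp1 j hj) hq
            (div_nonneg (hα0 j hj) hm.le) ((div_le_one hm).2 (hαm j hj))
    _ = (∏ j ∈ s, z j ^ α j) ^ (1 / m) := by
        rw [← finsetProd_rpow _ _ (fun j hj => rpow_nonneg (hz j hj) _)]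
        refine Finset.prod_congr rfl fun j hj => ?_
        rw [← rpow_mul (hz j hj), mul_one_div]
    _ ≤ (∑ j ∈ s, α j * z j) ^ (1 / m) := by
        gcongr
        · exact Finset.prod_nonneg fun j hj => rpow_nonneg (hz j hj) _
        · exact geom_mean_le_arith_mean_weighted s α z hα0 hα1 hz
    _ = (1 + (q - 1) * ∑ j ∈ s, α j * p j) ^ (1 / m) := by
        simp only [z, mul_add, mul_one, Finset.sum_add_distrib, hα1, Finset.mul_sum]
        congr 2; refine Finset.sum_congr rfl fun j _ => by ring

section

variable {Ω : Type*} [MeasurableSpace Ω] {μ : Measure Ω} [IsProbabilityMeasure μ]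

lemma mgf_const_mul_of_zero_or_one {X : Ω → ℝ} (hX : Measurable X)
    (h01 : ∀ ω, X ω = 0 ∨ X ω = 1) (c t : ℝ) :
    mgf (fun ω => c * X ω) μ t = 1 + μ.real {ω | X ω = 1} * (exp (t * c) - 1) := by
  have hS : MeasurableSet {ω | X ω = 1} := hX (measurableSet_singleton 1)
  have hexp : (fun ω => exp (t * (c * X ω)))
      = fun ω => {ω | X ω = 1}.indicator (fun _ => exp (t * c) - 1) ω + 1 := by
    funext ω
    rcases h01 ω with h | h <;> simp [h]
  rw [mgf, hexp, integral_add ((integrable_const _).indicator hS) (integrable_const 1),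
    integral_indicator_const _ hS, integral_const]
  simp only [smul_eq_mul, probReal_univ, one_mul]
  ring

lemma measureReal_weighted_sum_le_le {ι : Type*} [Fintype ι] {W : ι → Ω → ℝ}
    (hmeas : ∀ j, Measurable (W j)) (hindep : iIndepFun W μ) (hber : ∀ j ω, W j ω = 0 ∨ W j ω = 1)
    {α : ι → ℝ} (hα0 : ∀ j, 0 ≤ α j) (hα1 : ∑ j, α j = 1) {m : ℝ} (hm : 0 < m)
    (hαm : ∀ j, α j ≤ m) {q : ℝ} (hq0 : 0 < q) (hq1 : q ≤ 1) (a : ℝ) :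
    μ.real {ω | ∑ j, α j * W j ω ≤ a} ≤
      (q ^ (-a) * (1 + (q - 1) * ∑ j, α j * μ.real {ω | W j ω = 1})) ^ (1 / m) := by
  set t := log q / m
  have ht : t ≤ 0 := div_nonpos_of_nonpos_of_nonneg (log_nonpos hq0.le hq1) hm.le
  have hsum : (fun ω => ∑ j, α j * W j ω) = ∑ j, fun ω => α j * W j ω := by
    funext ω; simp only [Finset.sum_apply]
  have hint : Integrable (fun ω => exp (t * ∑ j, α j * W j ω)) μ := by
    refine .of_bound (by fun_prop) 1 (.of_forall fun ω => ?_)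
    have hX : 0 ≤ ∑ j, α j * W j ω := Finset.sum_nonneg fun j _ =>
      mul_nonneg (hα0 j) (by rcases hber j ω with h | h <;> simp [h])
    rw [norm_of_nonneg (exp_pos _).le, exp_le_one_iff]
    exact mul_nonpos_of_nonpos_of_nonneg ht hX
  have hmgf : mgf (fun ω => ∑ j, α j * W j ω) μ t
      = ∏ j, (1 + μ.real {ω | W j ω = 1} * (q ^ (α j / m) - 1)) := by
    have hY : iIndepFun (fun j ω => α j * W j ω) μ :=
      hindep.comp (fun j x => α j * x) fun j => measurable_const_mul (α j)
    rw [hsum, hY.mgf_sum fun j => (hmeas j).const_mul (α j)]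
    refine Finset.prod_congr rfl fun j _ => ?_
    rw [mgf_const_mul_of_zero_or_one (hmeas j) (hber j), rpow_def_of_pos hq0]
    simp only [t]
    ring_nf
  have hexp : exp (-t * a) = (q ^ (-a)) ^ (1 / m) := by
    rw [← rpow_mul hq0.le, rpow_def_of_pos hq0]
    congr 1; simp only [t]; ring
  calc μ.real {ω | ∑ j, α j * W j ω ≤ a}
      ≤ exp (-t * a) * mgf (fun ω => ∑ j, α j * W j ω) μ t :=
        measure_le_le_exp_mul_mgf a ht hint
    _ ≤ (q ^ (-a)) ^ (1 / m) * (1 + (q - 1) * ∑ j, α j * μ.real {ω | W j ω = 1}) ^ (1 / m) := by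
        rw [hexp, hmgf]
        gcongr
        exact prod_one_add_mul_rpow_sub_one_le (fun j _ => hα0 j) hα1 (fun j _ => hαm j) hm
          (fun j _ => measureReal_nonneg) (fun j _ => measureReal_le_one) hq0.le
    _ = _ := by
        have hS := sum_mul_le_one_of_le_one (fun j _ => hα0 j) hα1
          (fun j _ => measureReal_le_one (μ := μ) (s := {ω | W j ω = 1}))
        rw [mul_rpow (rpow_nonneg hq0.le _) (by nlinarith)]

end

theorem weighted_bernoulli_lower_tail_general
    {Ω : Type*} [MeasurableSpace Ω] (μ : Measure Ω) [IsProbabilityMeasure μ]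
    (N : ℕ) (W : Fin N → Ω → ℝ) (r α : Fin N → ℝ)
    (hmeas : ∀ j, Measurable (W j))
    (hindep : iIndepFun W μ)
    (hber : ∀ j ω, W j ω = 0 ∨ W j ω = 1)
    (hr : ∀ j, μ {ω | W j ω = 1} = ENNReal.ofReal (r j))
    (hα0 : ∀ j, 0 ≤ α j) (hα1 : ∑ j, α j = 1)
    (rv rstar : ℝ) (hrstar : rstar = ∑ j, α j * r j)
    (hpos : 0 < rv) (hlt : rv < rstar) :
    μ {ω | ∑ j, α j * W j ω < rv} ≤
      ENNReal.ofReal (Real.exp (-(1 / ⨆ j, α j) *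
        (rv * Real.log (rv / rstar) +
          (1 - rv) * Real.log ((1 - rv) / (1 - rstar))))) := by
  set m := ⨆ j, α j
  set p : Fin N → ℝ := fun j => μ.real {ω | W j ω = 1}
  change _ ≤ ENNReal.ofReal (exp (-(1 / m) * bernoulliKL rv rstar))
  have hm : 0 < m := ciSup_pos_of_sum_eq_one hα1
  have hrp : rstar ≤ ∑ j, α j * p j := hrstar ▸ Finset.sum_le_sum fun j _ =>
    mul_le_mul_of_nonneg_left (by simp only [p, measureReal_def, hr j, ENNReal.toReal_ofReal',
      le_max_left]) (hα0 j)
  have hp1 : ∑ j, α j * p j ≤ 1 :=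
    sum_mul_le_one_of_le_one (fun j _ => hα0 j) hα1 fun j _ => measureReal_le_one
  rcases (hrp.trans hp1).eq_or_lt with rfl | hrstar1
  · refine prob_le_one.trans (ENNReal.one_le_ofReal.2 (one_le_exp ?_))
    exact mul_nonneg_of_nonpos_of_nonpos (by simp [hm.le])
      (bernoulliKL_one_right_nonpos hpos.le hlt.le)
  obtain ⟨q, hq0, hq1, hq⟩ := exists_rpow_neg_mul_eq_exp_neg_bernoulliKL hpos hlt hrstar1
  calc μ {ω | ∑ j, α j * W j ω < rv}
      ≤ ENNReal.ofReal (μ.real {ω | ∑ j, α j * W j ω ≤ rv}) := by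
        rw [ofReal_measureReal (measure_ne_top μ _)]
        exact measure_mono (Set.ofPred_subset_ofPred.2 fun _ => le_of_lt)
    _ ≤ ENNReal.ofReal ((q ^ (-rv) * (1 + (q - 1) * ∑ j, α j * p j)) ^ (1 / m)) :=
        ENNReal.ofReal_le_ofReal <| measureReal_weighted_sum_le_le hmeas hindep hber hα0 hα1 hm
          (le_ciSup (Set.finite_range α).bddAbove) hq0 hq1.le rv
    _ ≤ ENNReal.ofReal ((q ^ (-rv) * (1 + (q - 1) * rstar)) ^ (1 / m)) := by
        refine ENNReal.ofReal_le_ofReal (rpow_le_rpow ?_ ?_ (by positivity))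
        · exact mul_nonneg (rpow_nonneg hq0.le _) (by nlinarith)
        · exact mul_le_mul_of_nonneg_left (by nlinarith) (rpow_nonneg hq0.le _)
    _ = ENNReal.ofReal (exp (-(1 / m) * bernoulliKL rv rstar)) := by
        rw [hq, ← exp_mul]
        ring_nf

theorem weighted_bernoulli_lower_tail
    {Ω : Type*} [MeasurableSpace Ω] (μ : Measure Ω) [IsProbabilityMeasure μ]
    (N : ℕ) (hN : 0 < N) (W : Fin N → Ω → ℝ) (r α : Fin N → ℝ)
    (hmeas : ∀ j, Measurable (W j))
    (hindep : iIndepFun W μ)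
    (hber : ∀ j ω, W j ω = 0 ∨ W j ω = 1)
    (hr : ∀ j, μ {ω | W j ω = 1} = ENNReal.ofReal (r j))
    (hα0 : ∀ j, 0 ≤ α j) (hα1 : ∑ j, α j = 1)
    (rv rstar : ℝ) (hrstar : rstar = ∑ j, α j * r j)
    (hpos : 0 < rv) (hlt : rv < rstar) :
    μ {ω | ∑ j, α j * W j ω < rv} ≤
      ENNReal.ofReal (Real.exp (-(1 / ⨆ j, α j) *
        (rv * Real.log (rv / rstar) +
          (1 - rv) * Real.log ((1 - rv) / (1 - rstar))))) :=
  weighted_bernoulli_lower_tail_general μ N W r α hmeas hindep hber hr hα0 hα1 rv rstar hrstar hpos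
    hlt
end
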